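/- Endpoints of trajectories of the perturbed rotation system converge to the rotated initial point as the perturbation vanishes: for every r⁰ ∈ ℝ³, every s > 0, and every δ > 0 there exists ε₀ > 0 such that for every ε ∈ (0, ε₀], every absolutely continuous solution r : [0,s] → ℝ³ of r′(τ) = ε ω f₀(r(τ)) + f₁(r(τ)) with r(0) = r⁰ satisfies |r(s) − Rot_s(r⁰)| < δ. -/

import Mathlib

open MeasureTheory Set

noncomputable section

/-- The state space: Bloch vectors in `ℝ³` with the Euclidean norm. -/
abbrev Pt := EuclideanSpace ℝ (Fin 3)

/-- The drift vector field `f₀`. -/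
def f0 (ω γ : ℝ) (r : Pt) : Pt :=
  WithLp.toLp 2 (![-r 1 - (γ / (2 * ω)) * r 0, r 0 - (γ / (2 * ω)) * r 1, (γ / ω) * (1 - r 2)])

/-- The coherent-control vector field `f₁` (infinitesimal rotation about the `r_x`-axis). -/
def f1 (r : Pt) : Pt := WithLp.toLp 2 (![0, -r 2, r 1])

/-- The incoherent-control vector field `f₂`. -/
def f2 (r : Pt) : Pt := WithLp.toLp 2 (![-r 0 / 2, -r 1 / 2, -r 2])

/-- Rotation by angle `s` about the `r_x`-axis. -/
def Rot (s : ℝ) (r : Pt) : Pt :=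
  WithLp.toLp 2 (![r 0, r 1 * Real.cos s - r 2 * Real.sin s, r 1 * Real.sin s + r 2 * Real.cos s])

/-!
The unperturbed trajectory `τ ↦ Rot_τ r⁰` solves `r′ = f₁(r)` exactly, hence solves the perturbed
equation `r′ = ε ω f₀(r) + f₁(r)` up to a defect of size `ε · sup ‖ω f₀‖` along the compact arc it
traces on `[0, s]`. The perturbed vector field is Lipschitz uniformly in `ε ∈ [-1, 1]`, so Grönwall's
inequality bounds the distance between the two trajectories by a quantity that depends continuously
on `ε` and vanishes at `ε = 0`.
-/

open Filter Topology
open scoped NNReal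

section IntegralEquation

variable {E : Type*} [NormedAddCommGroup E] [NormedSpace ℝ E]
  {r g : ℝ → E} {x₀ : E} {a b : ℝ}

theorem continuousOn_of_eq_add_integral (hab : a ≤ b) (hg : IntervalIntegrable g volume a b)
    (hr : ∀ t ∈ Icc a b, r t = x₀ + ∫ τ in a..t, g τ) : ContinuousOn r (Icc a b) := by
  have hprim := intervalIntegral.continuousOn_primitive_interval' hg left_mem_uIcc
  rw [uIcc_of_le hab] at hprim
  exact (continuousOn_const.add hprim).congr hr

theorem hasDerivWithinAt_Ici_of_eq_add_integral [CompleteSpace E] (hg : ContinuousOn g (Icc a b))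
    (hr : ∀ t ∈ Icc a b, r t = x₀ + ∫ τ in a..t, g τ) {t : ℝ} (ht : t ∈ Ico a b) :
    HasDerivWithinAt r (g t) (Ici t) t := by
  have hIcc : Icc a b ∈ 𝓝[>] t := Icc_mem_nhdsGT_of_mem ht
  have hint : IntervalIntegrable g volume a t :=
    (hg.mono (Icc_subset_Icc_right ht.2.le)).intervalIntegrable_of_Icc ht.1
  have hFTC : HasDerivWithinAt (fun u => ∫ τ in a..u, g τ) (g t) (Ici t) t :=
    intervalIntegral.integral_hasDerivWithinAt_right hint
      ((hg.stronglyMeasurableAtFilter_nhdsWithin measurableSet_Icc t).filter_mono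
        (nhdsWithin_le_of_mem hIcc))
      ((hg t (Ico_subset_Icc_self ht)).mono_of_mem_nhdsWithin hIcc)
  refine (hFTC.const_add x₀).congr_of_eventuallyEq ?_ (hr t (Ico_subset_Icc_self ht))
  exact eventually_of_mem (Icc_mem_nhdsGE_of_mem ht) hr

end IntegralEquation

section Perturbation

variable {E : Type*} [NormedAddCommGroup E] [NormedSpace ℝ E] [CompleteSpace E]
  {v₀ v₁ : E → E} {K₀ K₁ : ℝ≥0} {y r : ℝ → E} {s : ℝ}

theorem dist_le_gronwallBound_of_perturbed (h₀ : LipschitzWith K₀ v₀) (h₁ : LipschitzWith K₁ v₁)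
    (hy : ∀ t, HasDerivAt y (v₁ (y t)) t) {B : ℝ} (hB : ∀ t ∈ Icc 0 s, ‖v₀ (y t)‖ ≤ B)
    {ε : ℝ} (hε : ‖ε‖ ≤ 1)
    (hint : IntervalIntegrable (fun τ => ε • v₀ (r τ) + v₁ (r τ)) volume 0 s)
    (hr : ∀ t ∈ Icc 0 s, r t = y 0 + ∫ τ in (0:ℝ)..t, (ε • v₀ (r τ) + v₁ (r τ))) :
    ∀ t ∈ Icc 0 s, dist (r t) (y t) ≤ gronwallBound 0 (K₀ + K₁) (‖ε‖ * B) t := by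
  rcases lt_or_ge s 0 with hs | hs
  · simp [Icc_eq_empty_of_lt hs]
  have hv : LipschitzWith (K₀ + K₁) fun x => ε • v₀ x + v₁ x := by
    refine (((lipschitzWith_smul ε).comp h₀).add h₁).weaken ?_
    gcongr
    exact mul_le_of_le_one_left K₀.2 hε
  have hrc : ContinuousOn r (Icc 0 s) := continuousOn_of_eq_add_integral hs hint hr
  have hr_deriv : ∀ t ∈ Ico 0 s, HasDerivWithinAt r (ε • v₀ (r t) + v₁ (r t)) (Ici t) t :=
    fun t ht => hasDerivWithinAt_Ici_of_eq_add_integral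
      (hv.continuous.comp_continuousOn hrc) hr ht
  have hyc : Continuous y := continuous_iff_continuousAt.2 fun t => (hy t).continuousAt
  have hy_bound : ∀ t ∈ Ico 0 s, dist (v₁ (y t)) (ε • v₀ (y t) + v₁ (y t)) ≤ ‖ε‖ * B := by
    intro t ht
    rw [dist_eq_norm, sub_add_cancel_right, norm_neg, norm_smul]
    exact mul_le_mul_of_nonneg_left (hB t (Ico_subset_Icc_self ht)) (norm_nonneg ε)
  intro t ht
  simpa using dist_le_of_approx_trajectories_ODE (v := fun _ x => ε • v₀ x + v₁ x)
    (fun _ => hv) hrc hr_deriv (fun t _ => (dist_self _).le) hyc.continuousOn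
    (fun t _ => (hy t).hasDerivWithinAt) hy_bound (by simp [hr 0 ⟨le_rfl, hs⟩]) t ht

theorem exists_forall_dist_lt_of_perturbed (h₀ : LipschitzWith K₀ v₀) (h₁ : LipschitzWith K₁ v₁)
    (hy : ∀ t, HasDerivAt y (v₁ (y t)) t) (s : ℝ) {δ : ℝ} (hδ : 0 < δ) :
    ∃ ε₀ > (0:ℝ), ∀ ε : ℝ, 0 < ε → ε ≤ ε₀ → ∀ r : ℝ → E,
      IntervalIntegrable (fun τ => ε • v₀ (r τ) + v₁ (r τ)) volume 0 s →
      (∀ t ∈ Icc 0 s, r t = y 0 + ∫ τ in (0:ℝ)..t, (ε • v₀ (r τ) + v₁ (r τ))) →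
      ∀ t ∈ Icc 0 s, dist (r t) (y t) < δ := by
  have hyc : Continuous y := continuous_iff_continuousAt.2 fun t => (hy t).continuousAt
  obtain ⟨B, hB⟩ := isCompact_Icc.exists_bound_of_continuousOn
    (h₀.continuous.comp hyc).continuousOn (s := Icc 0 s)
  have hG : Tendsto (fun ε : ℝ => gronwallBound 0 (K₀ + K₁) (‖ε‖ * B) s) (𝓝 0) (𝓝 0) := by
    have hc : Continuous fun ε : ℝ => gronwallBound 0 (K₀ + K₁) (‖ε‖ * B) s :=
      (gronwallBound_continuous_ε 0 _ s).comp (by fun_prop)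
    simpa [gronwallBound_ε0_δ0] using hc.tendsto 0
  have hsmall : ∀ᶠ ε in 𝓝[>] (0:ℝ), ‖ε‖ ≤ 1 ∧ gronwallBound 0 (K₀ + K₁) (‖ε‖ * B) s < δ :=
    nhdsWithin_le_nhds <| ((tendsto_norm_zero.eventually (gt_mem_nhds one_pos)).mono
      fun _ h => h.le).and (hG.eventually (gt_mem_nhds hδ))
  obtain ⟨ε₀, hε₀, hε₀_small⟩ := mem_nhdsGT_iff_exists_Ioc_subset.1 hsmall
  refine ⟨ε₀, hε₀, fun ε hε hεε₀ r hint hr t ht => ?_⟩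
  obtain ⟨hε_le_one, hεδ⟩ := hε₀_small ⟨hε, hεε₀⟩
  have hB0 : 0 ≤ B := (norm_nonneg _).trans (hB 0 ⟨le_rfl, ht.1.trans ht.2⟩)
  calc dist (r t) (y t) ≤ gronwallBound 0 (K₀ + K₁) (‖ε‖ * B) t :=
        dist_le_gronwallBound_of_perturbed h₀ h₁ hy hB hε_le_one hint hr t ht
    _ ≤ gronwallBound 0 (K₀ + K₁) (‖ε‖ * B) s :=
        gronwallBound_mono le_rfl (by positivity) (by positivity) ht.2
    _ < δ := hεδ

end Perturbation

theorem norm_sq_pt (v : Pt) : ‖v‖ ^ 2 = v 0 ^ 2 + v 1 ^ 2 + v 2 ^ 2 := by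
  simp [EuclideanSpace.norm_sq_eq, Fin.sum_univ_three]

theorem lipschitzWith_of_norm_sq_sub_le {f : Pt → Pt} {K : ℝ≥0}
    (h : ∀ v w, ‖f v - f w‖ ^ 2 ≤ K ^ 2 * ‖v - w‖ ^ 2) : LipschitzWith K f :=
  LipschitzWith.of_dist_le_mul fun v w => by
    rw [dist_eq_norm, dist_eq_norm, ← sq_le_sq₀ (norm_nonneg _) (by positivity), mul_pow]
    exact h v w

theorem lipschitzWith_f0 (ω γ : ℝ) : LipschitzWith (1 + ‖γ / ω‖₊) (f0 ω γ) := by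
  refine lipschitzWith_of_norm_sq_sub_le fun v w => ?_
  simp only [norm_sq_pt, f0, PiLp.sub_apply, Matrix.cons_val_zero,
    Matrix.cons_val_one, Matrix.cons_val_two, Matrix.head_cons, Matrix.tail_cons,
    NNReal.coe_add, NNReal.coe_one, coe_nnnorm, Real.norm_eq_abs]
  rw [show γ / (2 * ω) = γ / ω / 2 by ring]
  generalize γ / ω = b
  have hb₁ : 1 + b ^ 2 / 4 ≤ (1 + |b|) ^ 2 := by nlinarith [abs_nonneg b, sq_abs b]
  have hb₂ : b ^ 2 ≤ (1 + |b|) ^ 2 := by nlinarith [abs_nonneg b, sq_abs b]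
  calc _ = (1 + b ^ 2 / 4) * ((v 0 - w 0) ^ 2 + (v 1 - w 1) ^ 2) + b ^ 2 * (v 2 - w 2) ^ 2 := by
        ring
    _ ≤ (1 + |b|) ^ 2 * ((v 0 - w 0) ^ 2 + (v 1 - w 1) ^ 2) + (1 + |b|) ^ 2 * (v 2 - w 2) ^ 2 := by
        gcongr
    _ = _ := by ring

theorem lipschitzWith_f1 : LipschitzWith 1 f1 := by
  refine lipschitzWith_of_norm_sq_sub_le fun v w => ?_
  simp only [norm_sq_pt, f1, PiLp.sub_apply, Matrix.cons_val_zero, Matrix.cons_val_one,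
    Matrix.cons_val_two, Matrix.head_cons, Matrix.tail_cons, NNReal.coe_one, one_pow, one_mul]
  nlinarith [sq_nonneg (v 0 - w 0)]

theorem rot_zero (v : Pt) : Rot 0 v = v := by
  ext i
  fin_cases i <;> simp [Rot]

theorem hasDerivAt_rot (r0 : Pt) (t : ℝ) :
    HasDerivAt (fun t => Rot t r0) (f1 (Rot t r0)) t := by
  set c : Pt := WithLp.toLp 2 ![r0 0, 0, 0] with hc
  set A : Pt := WithLp.toLp 2 ![0, r0 1, r0 2] with hA
  set B : Pt := WithLp.toLp 2 ![0, -r0 2, r0 1] with hB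
  have hRot : (fun t => Rot t r0) = fun t => c + (Real.cos t • A + Real.sin t • B) := by
    funext t; ext i
    fin_cases i <;> simp [Rot, hc, hA, hB] <;> ring
  rw [hRot]
  have hd : HasDerivAt (fun t => c + (Real.cos t • A + Real.sin t • B))
      ((-Real.sin t) • A + Real.cos t • B) t :=
    (((Real.hasDerivAt_cos t).smul_const A).add
      ((Real.hasDerivAt_sin t).smul_const B)).const_add c
  convert hd using 1
  ext i
  fin_cases i <;> simp [f1, Rot, hA, hB] <;> ring

theorem endpoint_tendsto_rot_general (ω γ : ℝ) (r0 : Pt) (s δ : ℝ)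
    (hs : 0 < s) (hδ : 0 < δ) :
    ∃ ε0 > (0:ℝ), ∀ ε : ℝ, 0 < ε → ε ≤ ε0 →
      ∀ r : ℝ → Pt,
        IntervalIntegrable (fun τ => (ε * ω) • f0 ω γ (r τ) + f1 (r τ)) volume 0 s →
        (∀ t ∈ Icc 0 s, r t = r0 + ∫ τ in (0:ℝ)..t, ((ε * ω) • f0 ω γ (r τ) + f1 (r τ))) →
        ‖r s - Rot s r0‖ < δ := by
  have hv₀ : LipschitzWith (‖ω‖₊ * (1 + ‖γ / ω‖₊)) fun x => ω • f0 ω γ x :=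
    (lipschitzWith_smul ω).comp (lipschitzWith_f0 ω γ)
  obtain ⟨ε0, hε0, h⟩ :=
    exists_forall_dist_lt_of_perturbed hv₀ lipschitzWith_f1 (hasDerivAt_rot r0) s hδ
  refine ⟨ε0, hε0, fun ε hε hεε0 r hint hr => ?_⟩
  simp only [mul_smul] at hint hr
  rw [← dist_eq_norm]
  exact h ε hε hεε0 r hint (by simpa only [rot_zero] using hr) s (right_mem_Icc.2 hs.le)

/-- Endpoints of absolutely continuous solutions of `r′ = ε ω f₀(r) + f₁(r)`, `r(0) = r⁰`,
on `[0,s]` converge to the rotated point `Rot_s(r⁰)` as `ε → 0⁺`. -/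
theorem endpoint_tendsto_rot (ω γ : ℝ) (hω : 0 < ω) (hγ : 0 ≤ γ) (r0 : Pt) (s δ : ℝ)
    (hs : 0 < s) (hδ : 0 < δ) :
    ∃ ε0 > (0:ℝ), ∀ ε : ℝ, 0 < ε → ε ≤ ε0 →
      ∀ r : ℝ → Pt,
        IntervalIntegrable (fun τ => (ε * ω) • f0 ω γ (r τ) + f1 (r τ)) volume 0 s →
        (∀ t ∈ Icc 0 s, r t = r0 + ∫ τ in (0:ℝ)..t, ((ε * ω) • f0 ω γ (r τ) + f1 (r τ))) →
        ‖r s - Rot s r0‖ < δ :=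
  endpoint_tendsto_rot_general ω γ r0 s δ hs hδ
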